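/- arXiv:2311.13231 — 2 statements merged into one kernel-verified Lean document; each statement's English description precedes it below -/
import Mathlib

section
/- Let Q_min ≤ Q_max be real numbers, let Q₀, Q₁ ∈ [Q_min, Q_max], set ξ = exp(Q_max)/exp(Q_min), and let σ be any real number. Then (exp(Q₁ + 3Q₀) + exp(3Q₁ + Q₀)) · (exp(σ²) − 1) / (exp(Q₁) + exp(Q₀))⁴ ≤ (ξ² + 1) · (exp(σ²) − 1) / (16·ξ). -/
open Real

/-- Combined variance bound in the proof of Proposition 2. -/
theorem stmt_8 (Qmin Qmax Q₀ Q₁ σ : ℝ) (hle : Qmin ≤ Qmax)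
    (h₀ : Q₀ ∈ Set.Icc Qmin Qmax) (h₁ : Q₁ ∈ Set.Icc Qmin Qmax)
    (ξ : ℝ) (hξ : ξ = exp Qmax / exp Qmin) :
    (exp (Q₁ + 3 * Q₀) + exp (3 * Q₁ + Q₀)) * (exp (σ ^ 2) - 1) /
        (exp Q₁ + exp Q₀) ^ 4
      ≤ (ξ ^ 2 + 1) * (exp (σ ^ 2) - 1) / (16 * ξ) := by
  obtain ⟨h₀l, h₀r⟩ := h₀
  obtain ⟨h₁l, h₁r⟩ := h₁
  set a := exp Q₀ with ha'
  set b := exp Q₁ with hb'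
  have ha : 0 < a := exp_pos _
  have hb : 0 < b := exp_pos _
  have hξ' : ξ = exp (Qmax - Qmin) := by rw [hξ, exp_sub]
  have hξpos : 0 < ξ := by rw [hξ']; exact exp_pos _
  have hE : 0 ≤ exp (σ ^ 2) - 1 := by
    have := Real.one_le_exp (sq_nonneg σ); linarith
  have hba : b ≤ ξ * a := by
    rw [hξ', ha', hb', ← exp_add]
    exact exp_le_exp.2 (by linarith)
  have hab : a ≤ ξ * b := by
    rw [hξ', ha', hb', ← exp_add]
    exact exp_le_exp.2 (by linarith)
  have hN : exp (Q₁ + 3 * Q₀) + exp (3 * Q₁ + Q₀) = b * a ^ 3 + b ^ 3 * a := by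
    rw [ha', hb']
    rw [show Q₁ + 3 * Q₀ = Q₁ + (Q₀ + (Q₀ + Q₀)) by ring,
        show 3 * Q₁ + Q₀ = Q₁ + (Q₁ + (Q₁ + Q₀)) by ring]
    simp [exp_add]; ring
  rw [hN]
  have hD1 : 0 < (b + a) ^ 4 := by positivity
  have hD2 : 0 < 16 * ξ := by linarith
  rw [div_le_div_iff₀ hD1 hD2]
  have h1 : ξ * (a ^ 2 + b ^ 2) ≤ (ξ ^ 2 + 1) * (a * b) := by
    nlinarith [mul_nonneg (sub_nonneg.2 hba) (sub_nonneg.2 hab)]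
  have h2 : 16 * (a * b) ^ 2 ≤ (a + b) ^ 4 := by
    nlinarith [sq_nonneg (a - b), sq_nonneg (a + b), mul_pos ha hb]
  have h1' := mul_le_mul_of_nonneg_right h1 (by positivity : (0:ℝ) ≤ 16 * (a * b))
  have h2' := mul_le_mul_of_nonneg_left h2 (by positivity : (0:ℝ) ≤ ξ ^ 2 + 1)
  have key : 16 * ξ * (b * a ^ 3 + b ^ 3 * a) ≤ (ξ ^ 2 + 1) * (b + a) ^ 4 := by
    nlinarith [h1', h2']
  calc (b * a ^ 3 + b ^ 3 * a) * (exp (σ ^ 2) - 1) * (16 * ξ)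
      = (16 * ξ * (b * a ^ 3 + b ^ 3 * a)) * (exp (σ ^ 2) - 1) := by ring
    _ ≤ ((ξ ^ 2 + 1) * (b + a) ^ 4) * (exp (σ ^ 2) - 1) :=
        mul_le_mul_of_nonneg_right key hE
    _ = (ξ ^ 2 + 1) * (exp (σ ^ 2) - 1) * (b + a) ^ 4 := by ring
end

section
/- Let Q₀, Q₁, σ be real numbers with σ > 0, and let X₀ and X₁ be independent real-valued random variables with X_i distributed as the Gaussian measure with mean Q_i and variance σ². Define M₁ = E[exp(X₁)] / (E[exp(X₁)] + E[exp(X₀)]) and M₂ = E[exp(2X₁)] / (E[exp(2X₁)] + E[exp(2X₀)] + 2·E[exp(X₀)]·E[exp(X₁)]). Then M₂ − M₁² = 2·exp(3Q₁ + Q₀)·(exp(σ²) − 1) / ((exp(2Q₁ + σ²) + exp(2Q₀ + σ²) + 2·exp(Q₀ + Q₁)) · (exp(Q₁) + exp(Q₀))²). -/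
open MeasureTheory ProbabilityTheory Real
open scoped NNReal

/-! Both ratios are read off the Gaussian moment generating function
`E[exp (t X)] = exp (t Q + t² σ² / 2)` at `t = 1, 2`: writing `a = exp Q₁`, `b = exp Q₀`,
`s = exp (σ² / 2)`, one gets `M₁ = a / (a + b)` and `M₂ = a² s² / (a² s² + b² s² + 2 a b)`,
and the difference of these two rational functions is the claimed expression. -/

theorem integral_exp_nat_mul_of_map_eq_gaussianReal {Ω : Type*} {mΩ : MeasurableSpace Ω}
    {p : Measure Ω} {X : Ω → ℝ} {μ : ℝ} {v : ℝ≥0} (hX : p.map X = gaussianReal μ v) (n : ℕ) :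
    ∫ ω, exp (n * X ω) ∂p = exp μ ^ n * exp (v / 2) ^ n ^ 2 := by
  rw [← mgf, mgf_gaussianReal hX, ← exp_nat_mul, ← exp_nat_mul, ← exp_add]
  push_cast
  ring_nf

theorem div_sub_sq_div_eq {a b s : ℝ} (ha : 0 < a) (hb : 0 < b) (hs : 0 < s) :
    a ^ 2 * s ^ 4 / (a ^ 2 * s ^ 4 + b ^ 2 * s ^ 4 + 2 * (b * s) * (a * s))
        - (a * s / (a * s + b * s)) ^ 2
      = 2 * (a ^ 3 * b) * (s ^ 2 - 1) /
        ((a ^ 2 * s ^ 2 + b ^ 2 * s ^ 2 + 2 * (b * a)) * (a + b) ^ 2) := by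
  field_simp
  ring

theorem stmt_10_general {Ω : Type*} [MeasureSpace Ω]
    (Q₀ Q₁ σ : ℝ) (X₀ X₁ : Ω → ℝ)
    (h₀ : Measure.map X₀ ℙ = gaussianReal Q₀ ⟨σ ^ 2, sq_nonneg σ⟩)
    (h₁ : Measure.map X₁ ℙ = gaussianReal Q₁ ⟨σ ^ 2, sq_nonneg σ⟩)
    (M₁ M₂ : ℝ)
    (hM₁ : M₁ = (∫ ω, exp (X₁ ω) ∂ℙ) / ((∫ ω, exp (X₁ ω) ∂ℙ) + (∫ ω, exp (X₀ ω) ∂ℙ)))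
    (hM₂ : M₂ = (∫ ω, exp (2 * X₁ ω) ∂ℙ) /
        ((∫ ω, exp (2 * X₁ ω) ∂ℙ) + (∫ ω, exp (2 * X₀ ω) ∂ℙ) +
          2 * (∫ ω, exp (X₀ ω) ∂ℙ) * (∫ ω, exp (X₁ ω) ∂ℙ))) :
    M₂ - M₁ ^ 2
      = 2 * exp (3 * Q₁ + Q₀) * (exp (σ ^ 2) - 1) /
        ((exp (2 * Q₁ + σ ^ 2) + exp (2 * Q₀ + σ ^ 2) + 2 * exp (Q₀ + Q₁)) *
          (exp Q₁ + exp Q₀) ^ 2) := by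
  have first_moment {X : Ω → ℝ} {Q : ℝ}
      (hX : Measure.map X ℙ = gaussianReal Q ⟨σ ^ 2, sq_nonneg σ⟩) :
      ∫ ω, exp (X ω) ∂ℙ = exp Q * exp (σ ^ 2 / 2) := by
    have h := integral_exp_nat_mul_of_map_eq_gaussianReal hX 1
    simp only [Nat.cast_one, one_mul, pow_one, one_pow] at h
    -- `exact`, not `simpa`: in the statement `⟨σ ^ 2, _⟩` elaborates to a subtype value, whose
    -- coercion to `ℝ` is `σ ^ 2` only after unfolding `NNReal`.
    exact h
  have second_moment {X : Ω → ℝ} {Q : ℝ}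
      (hX : Measure.map X ℙ = gaussianReal Q ⟨σ ^ 2, sq_nonneg σ⟩) :
      ∫ ω, exp (2 * X ω) ∂ℙ = exp Q ^ 2 * exp (σ ^ 2 / 2) ^ 4 := by
    have h := integral_exp_nat_mul_of_map_eq_gaussianReal hX 2
    simp only [Nat.cast_ofNat] at h
    exact h
  rw [hM₁, hM₂, first_moment h₀, first_moment h₁, second_moment h₀, second_moment h₁,
    div_sub_sq_div_eq (exp_pos _) (exp_pos _) (exp_pos _)]
  simp only [← exp_nat_mul, ← exp_add]
  ring_nf

/-- Variance expression in the proof of Proposition 2: with `X₀, X₁` independent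
Gaussians with means `Q₀, Q₁` and common variance `σ²`, the moments
`M₁ = E[exp X₁]/(E[exp X₁]+E[exp X₀])` and
`M₂ = E[exp 2X₁]/(E[exp 2X₁]+E[exp 2X₀]+2 E[exp X₀] E[exp X₁])` satisfy
`M₂ − M₁² = 2 exp(3Q₁+Q₀)(exp(σ²)−1) /
  ((exp(2Q₁+σ²)+exp(2Q₀+σ²)+2 exp(Q₀+Q₁))(exp Q₁+exp Q₀)²)`. -/
theorem stmt_10 {Ω : Type*} [MeasureSpace Ω] [IsProbabilityMeasure (ℙ : Measure Ω)]
    (Q₀ Q₁ σ : ℝ) (hσ : 0 < σ) (X₀ X₁ : Ω → ℝ)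
    (hindep : IndepFun X₀ X₁ ℙ)
    (h₀ : Measure.map X₀ ℙ = gaussianReal Q₀ ⟨σ ^ 2, sq_nonneg σ⟩)
    (h₁ : Measure.map X₁ ℙ = gaussianReal Q₁ ⟨σ ^ 2, sq_nonneg σ⟩)
    (M₁ M₂ : ℝ)
    (hM₁ : M₁ = (∫ ω, exp (X₁ ω) ∂ℙ) / ((∫ ω, exp (X₁ ω) ∂ℙ) + (∫ ω, exp (X₀ ω) ∂ℙ)))
    (hM₂ : M₂ = (∫ ω, exp (2 * X₁ ω) ∂ℙ) /
        ((∫ ω, exp (2 * X₁ ω) ∂ℙ) + (∫ ω, exp (2 * X₀ ω) ∂ℙ) +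
          2 * (∫ ω, exp (X₀ ω) ∂ℙ) * (∫ ω, exp (X₁ ω) ∂ℙ))) :
    M₂ - M₁ ^ 2
      = 2 * exp (3 * Q₁ + Q₀) * (exp (σ ^ 2) - 1) /
        ((exp (2 * Q₁ + σ ^ 2) + exp (2 * Q₀ + σ ^ 2) + 2 * exp (Q₀ + Q₁)) *
          (exp Q₁ + exp Q₀) ^ 2) :=
  stmt_10_general Q₀ Q₁ σ X₀ X₁ h₀ h₁ M₁ M₂ hM₁ hM₂
end
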